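/- arXiv:2510.12937 — 3 statements merged into one kernel-verified Lean document; each statement's English description precedes it below -/
import Mathlib

section
/- In any framed polytope P, there are no cellular 0-loops: if F₁,…,F_m is a sequence of faces of P of dimension at least 1 such that for each i the 0-target of F_i meets the 0-source of F_{i+1}, then all F_i are pairwise distinct. Indeed, for every face F of positive dimension, the value of the dual functional v₁* on π₁ of the 0-source of F is strictly less than its value on π₁ of the 0-target of F. -/
noncomputable section
open scoped Classical

/-- The ambient space `ℝ^d`. -/
abbrev Amb (d : ℕ) := Fin d → ℝ

variable {d : ℕ}

/-- The linear span of a subset of `ℝ^d`: the span of differences of its points. -/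
def linSpan (F : Set (Amb d)) : Submodule ℝ (Amb d) :=
  Submodule.span ℝ {w | ∃ x ∈ F, ∃ y ∈ F, w = x - y}

/-- The dimension of a subset of `ℝ^d` (dimension of its affine span). -/
def fdim (F : Set (Amb d)) : ℕ := Module.finrank ℝ (linSpan F)

/-- `F` is a face of `P`: the maximal locus of a linear functional on `P`. -/
def IsFaceOf (P F : Set (Amb d)) : Prop :=
  ∃ φ : Amb d →ₗ[ℝ] ℝ, F = {x ∈ P | ∀ y ∈ P, φ y ≤ φ x}

/-- `η` is a normal covector for the face `E` of `Q`: its maximal locus on `Q` is `E`. -/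
def NormalOf (Q E : Set (Amb d)) (η : Amb d →ₗ[ℝ] ℝ) : Prop :=
  E = {x ∈ Q | ∀ y ∈ Q, η y ≤ η x}

/-- The `k`-th projection associated to a frame `B`: sends `B i` to `B i` for `i < k`
and to `0` for `i ≥ k`. -/
def proj (B : Module.Basis (Fin d) ℝ (Amb d)) (k : ℕ) : Amb d →ₗ[ℝ] Amb d :=
  B.constr ℝ (fun i => if (i : ℕ) < k then B i else 0)

/-- The `(k+1)`-st frame vector `v_{k+1}` (0-indexed: `B k`). -/
def fvec (B : Module.Basis (Fin d) ℝ (Amb d)) (k : ℕ) : Amb d :=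
  if h : k < d then B ⟨k, h⟩ else 0

/-- A frame `B` is `P`-admissible if for every (nonempty) `k`-face `F` of `P`, the
projection `π_k` restricts to a linear isomorphism on `Lin F` (equivalently, is
injective on `Lin F`, the dimensions being equal). -/
def Admissible (P : Set (Amb d)) (B : Module.Basis (Fin d) ℝ (Amb d)) : Prop :=
  ∀ F : Set (Amb d), IsFaceOf P F → F.Nonempty →
    ∀ w ∈ linSpan F, proj B (fdim F) w = 0 → w = 0

/-- `w : Fin k → ℝ^d` represents the induced orientation of the face `F`:
each `w i = σ_k^F (v_{i+1})`, i.e. `w i ∈ Lin F` and `π_k (w i) = v_{i+1}`.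
The induced orientation `β_F` is then (the class of) `w 0 ∧ ⋯ ∧ w (k-1)`. -/
def OriRep (B : Module.Basis (Fin d) ℝ (Amb d)) (F : Set (Amb d)) (k : ℕ)
    (w : Fin k → Amb d) : Prop :=
  ∀ i : Fin k, w i ∈ linSpan F ∧ proj B k (w i) = fvec B (i : ℕ)

/-- Two frames are `P`-equivalent if they induce the same `f`-orientation on every
(nonempty) face of `P`: any representatives of the induced orientations are positive
multiples of each other in the exterior algebra. -/
def FrameEquiv (P : Set (Amb d)) (B B' : Module.Basis (Fin d) ℝ (Amb d)) : Prop :=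
  ∀ F : Set (Amb d), IsFaceOf P F → F.Nonempty →
    ∀ w w' : Fin (fdim F) → Amb d, OriRep B F (fdim F) w → OriRep B' F (fdim F) w' →
      ∃ l : ℝ, 0 < l ∧
        ExteriorAlgebra.ιMulti ℝ (fdim F) w = l • ExteriorAlgebra.ιMulti ℝ (fdim F) w'

/-- `G` belongs to the `k`-target of the face `F`: `G` is a `k`-face of `F` whose
projection `π_{k+1}(G)` is a facet of `π_{k+1}(F)` with a normal covector evaluating
positively on `v_{k+1}`. -/
def InKTarget (B : Module.Basis (Fin d) ℝ (Amb d)) (k : ℕ) (F G : Set (Amb d)) : Prop :=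
  IsFaceOf F G ∧ G.Nonempty ∧ fdim G = k ∧
  ∃ η : Amb d →ₗ[ℝ] ℝ,
    NormalOf (proj B (k+1) '' F) (proj B (k+1) '' G) η ∧ 0 < η (fvec B k)

/-- `G` belongs to the `k`-source of the face `F`. -/
def InKSource (B : Module.Basis (Fin d) ℝ (Amb d)) (k : ℕ) (F G : Set (Amb d)) : Prop :=
  IsFaceOf F G ∧ G.Nonempty ∧ fdim G = k ∧
  ∃ η : Amb d →ₗ[ℝ] ℝ,
    NormalOf (proj B (k+1) '' F) (proj B (k+1) '' G) η ∧ η (fvec B k) < 0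

/-- `E` belongs to the target `t(F)` of the face `F` (the `(dim F - 1)`-target). -/
def InTarget (B : Module.Basis (Fin d) ℝ (Amb d)) (F E : Set (Amb d)) : Prop :=
  InKTarget B (fdim F - 1) F E

/-- `E` belongs to the source `s(F)` of the face `F`. -/
def InSource (B : Module.Basis (Fin d) ℝ (Amb d)) (F E : Set (Amb d)) : Prop :=
  InKSource B (fdim F - 1) F E

/-- A cellular `k`-string in the framed polytope `(P,B)`: a sequence of faces of
dimension `> k` such that consecutive faces are glued along a common face in the
`k`-target of the first and the `k`-source of the second. -/
def IsCellString (B : Module.Basis (Fin d) ℝ (Amb d)) (P : Set (Amb d)) (k : ℕ) {m : ℕ}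
    (Fs : Fin m → Set (Amb d)) : Prop :=
  (∀ i, IsFaceOf P (Fs i) ∧ k < fdim (Fs i)) ∧
  ∀ i : ℕ, ∀ h : i + 1 < m,
    ∃ G, InKTarget B k (Fs ⟨i, by omega⟩) G ∧ InKSource B k (Fs ⟨i+1, h⟩) G


/-- The `0`-source of a face: its points minimizing the first frame coordinate. -/
def src0 (hd : 0 < d) (B : Module.Basis (Fin d) ℝ (Amb d)) (F : Set (Amb d)) : Set (Amb d) :=
  {x ∈ F | ∀ y ∈ F, B.repr x ⟨0, hd⟩ ≤ B.repr y ⟨0, hd⟩}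

/-- The `0`-target of a face: its points maximizing the first frame coordinate. -/
def tgt0 (hd : 0 < d) (B : Module.Basis (Fin d) ℝ (Amb d)) (F : Set (Amb d)) : Set (Amb d) :=
  {x ∈ F | ∀ y ∈ F, B.repr y ⟨0, hd⟩ ≤ B.repr x ⟨0, hd⟩}

/-! If the first frame coordinate were constant on a face `F` of positive dimension, it would
vanish on `Lin F`. But admissibility makes `Lin F → ℝ^{dim F}`, `w ↦ (v₁*(w), …, v_{dim F}*(w))`,
injective, hence bijective by dimension count, so some `w ∈ Lin F` has `v₁*(w) = 1`. Along a
cellular `0`-string the first coordinate of the gluing points then strictly increases, so no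
face can occur twice. -/

lemma proj_eq_zero_of_repr_eq_zero (B : Module.Basis (Fin d) ℝ (Amb d)) {k : ℕ} {u : Amb d}
    (h : ∀ i : Fin d, (i : ℕ) < k → B.repr u i = 0) : proj B k u = 0 := by
  rw [proj, Module.Basis.constr_apply, Finsupp.sum]
  refine Finset.sum_eq_zero fun i _ => ?_
  by_cases hik : (i : ℕ) < k
  · simp [h i hik]
  · simp [hik]

lemma fdim_le (F : Set (Amb d)) : fdim F ≤ d :=
  (Submodule.finrank_le (linSpan F)).trans_eq (Module.finrank_fin_fun ℝ)

lemma exists_mem_linSpan_repr_eq (B : Module.Basis (Fin d) ℝ (Amb d)) {F : Set (Amb d)}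
    (hinj : ∀ w ∈ linSpan F, proj B (fdim F) w = 0 → w = 0) (c : Fin d → ℝ) :
    ∃ u ∈ linSpan F, ∀ i : Fin d, (i : ℕ) < fdim F → B.repr u i = c i := by
  let L : linSpan F →ₗ[ℝ] (Fin (fdim F) → ℝ) :=
    (LinearMap.pi fun i => B.coord (Fin.castLE (fdim_le F) i)).comp (linSpan F).subtype
  have hL : Function.Injective L := by
    rw [← LinearMap.ker_eq_bot, Submodule.eq_bot_iff]
    rintro ⟨u, hu⟩ hLu
    have hproj : proj B (fdim F) u = 0 := proj_eq_zero_of_repr_eq_zero B fun i hi => by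
      simpa [L] using congrFun hLu ⟨i, hi⟩
    simpa using hinj u hu hproj
  have hrank : Module.finrank ℝ (linSpan F) = Module.finrank ℝ (Fin (fdim F) → ℝ) :=
    (Module.finrank_fin_fun ℝ).symm
  obtain ⟨u, hu⟩ := (LinearMap.injective_iff_surjective_of_finrank_eq_finrank hrank).mp hL
    fun i => c (Fin.castLE (fdim_le F) i)
  refine ⟨u, u.2, fun i hi => ?_⟩
  simpa [L] using congrFun hu ⟨i, hi⟩

lemma linSpan_le_ker_of_forall_eq (φ : Amb d →ₗ[ℝ] ℝ) {F : Set (Amb d)} {c : ℝ}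
    (h : ∀ a ∈ F, φ a = c) : linSpan F ≤ LinearMap.ker φ := by
  rw [linSpan, Submodule.span_le]
  rintro w ⟨a, ha, b, hb, rfl⟩
  simp [h a ha, h b hb]

lemma repr_src0_lt_repr_tgt0 (hd : 0 < d) (B : Module.Basis (Fin d) ℝ (Amb d))
    {F : Set (Amb d)} (hinj : ∀ w ∈ linSpan F, proj B (fdim F) w = 0 → w = 0)
    (hdim : 1 ≤ fdim F) {x y : Amb d} (hx : x ∈ src0 hd B F) (hy : y ∈ tgt0 hd B F) :
    B.repr x ⟨0, hd⟩ < B.repr y ⟨0, hd⟩ := by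
  by_contra! hyx
  have hconst : ∀ a ∈ F, B.coord ⟨0, hd⟩ a = B.repr x ⟨0, hd⟩ := fun a ha =>
    le_antisymm ((hy.2 a ha).trans hyx) (hx.2 a ha)
  obtain ⟨u, hu, hu1⟩ := exists_mem_linSpan_repr_eq B hinj fun _ => 1
  have hu0 : B.repr u ⟨0, hd⟩ = 0 := linSpan_le_ker_of_forall_eq _ hconst hu
  exact one_ne_zero ((hu1 ⟨0, hd⟩ hdim).symm.trans hu0)

lemma injective_of_chain {α σ β : Type*} [Preorder β] (c : α → β) (src tgt : σ → Set α)
    {m : ℕ} (Fs : Fin m → σ)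
    (hlt : ∀ i x y, x ∈ src (Fs i) → y ∈ tgt (Fs i) → c x < c y)
    (hchain : ∀ (i : ℕ) (h : i + 1 < m), (tgt (Fs ⟨i, by omega⟩) ∩ src (Fs ⟨i + 1, h⟩)).Nonempty) :
    Function.Injective Fs := by
  choose z hz using hchain
  have hmono : ∀ i j (hi : i + 1 < m) (hj : j + 1 < m), i ≤ j → c (z i hi) ≤ c (z j hj) := by
    intro i j hi hj hij
    induction j, hij using Nat.le_induction with
    | base => exact le_rfl
    | succ n _ ih =>
      exact (ih (by omega)).trans (hlt _ _ _ (hz n (by omega)).2 (hz (n + 1) hj).1).le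
  suffices h : ∀ a b : Fin m, (a : ℕ) < b → Fs a ≠ Fs b by
    intro a b hab
    rcases lt_trichotomy (a : ℕ) b with hlt | heq | hgt
    · exact absurd hab (h a b hlt)
    · exact Fin.ext heq
    · exact absurd hab.symm (h b a hgt)
  rintro ⟨a, ha⟩ ⟨_ | b, hb⟩ hab hFab <;> dsimp only at hab
  · omega
  -- `z b` lies in the source of `Fs (b + 1) = Fs a`, and `z a` in its target
  have hba : c (z b hb) < c (z a (by omega)) :=
    hlt _ _ _ (hFab ▸ (hz b hb).2) (hz a (by omega)).1
  exact (hmono a b _ hb (by omega)).not_gt hba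

theorem stmt9 (d : ℕ) (hd : 0 < d) (P : Set (Amb d))
    (B : Module.Basis (Fin d) ℝ (Amb d)) (hB : Admissible P B) :
    (∀ F : Set (Amb d), IsFaceOf P F → 1 ≤ fdim F →
      ∀ x ∈ src0 hd B F, ∀ y ∈ tgt0 hd B F, B.repr x ⟨0, hd⟩ < B.repr y ⟨0, hd⟩) ∧
    (∀ (m : ℕ) (Fs : Fin m → Set (Amb d)),
      (∀ i, IsFaceOf P (Fs i) ∧ 1 ≤ fdim (Fs i)) →
      (∀ (i : ℕ) (h : i + 1 < m),
        (tgt0 hd B (Fs ⟨i, by omega⟩) ∩ src0 hd B (Fs ⟨i+1, h⟩)).Nonempty) →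
      Function.Injective Fs) := by
  have hlt : ∀ F, IsFaceOf P F → 1 ≤ fdim F → ∀ x ∈ src0 hd B F, ∀ y ∈ tgt0 hd B F,
      B.repr x ⟨0, hd⟩ < B.repr y ⟨0, hd⟩ := fun F hF hdim x hx y hy =>
    repr_src0_lt_repr_tgt0 hd B (hB F hF ⟨x, hx.1⟩) hdim hx hy
  refine ⟨hlt, fun m Fs hface hchain => ?_⟩
  exact injective_of_chain (fun x => B.repr x ⟨0, hd⟩) (src0 hd B) (tgt0 hd B) Fs
    (fun i x y hx hy => hlt _ (hface i).1 (hface i).2 x hx y hy) hchain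
end
end

section
/- Let Z(n,d) denote the cyclic zonotope, the Minkowski sum of the segments from the origin to ξ(t_i) for i = 1,…,n, where ξ(t) = (1, t, …, t^{d−1}) and t₁ < ⋯ < t_n. Then the canonical frame (e₁,…,e_d) of ℝ^d is Z(n,d)-admissible; in particular, for every k ≤ d and every k-face F of Z(n,d), the coordinate projection onto the first k coordinates restricts to a linear isomorphism on the linear span of F. -/
noncomputable section
open scoped Classical

variable {d : ℕ}

/-!
A face of the zonotope `∑ [0, ξ i]` maximizing `φ` is, up to translation, the zonotope of the
generators with `φ (ξ i) = 0`: every other coefficient is pinned to `0` or `1`. So the linear span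
of a face is spanned by a set of Veronese vectors. If it has dimension `m`, it contains `m` of
them with distinct parameters, and their projections to the first `m` coordinates form a
nonsingular Vandermonde matrix, so the projection is injective on the span.
-/

lemma linSpan_eq_vectorSpan (F : Set (Amb d)) : linSpan F = vectorSpan ℝ F := by
  rw [linSpan, vectorSpan_def]
  congr 1
  ext w
  simp [Set.mem_vsub, eq_comm]

section Zonotope

variable {E ι : Type*} [AddCommGroup E] [Module ℝ E] [Fintype ι]

def zonotope (ξ : ι → E) : Set E :=
  {x | ∃ c : ι → ℝ, (∀ i, c i ∈ Set.Icc (0 : ℝ) 1) ∧ x = ∑ i, c i • ξ i}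

lemma sum_update_smul [DecidableEq ι] (c : ι → ℝ) (ξ : ι → E) (i : ι) (a : ℝ) :
    ∑ j, Function.update c i a j • ξ j = ∑ j, c j • ξ j + (a - c i) • ξ i := by
  have : Function.update c i a = c + Pi.single i (a - c i) := by
    ext j; rcases eq_or_ne j i with rfl | h <;> simp [*]
  simp [this, add_smul, Finset.sum_add_distrib, Pi.single_apply, ite_smul]

lemma mul_eq_max_of_sum_mem_face {ξ : ι → E} {φ : E →ₗ[ℝ] ℝ} {c : ι → ℝ}
    (hc : ∀ i, c i ∈ Set.Icc (0 : ℝ) 1)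
    (hface : ∀ y ∈ zonotope ξ, φ y ≤ φ (∑ i, c i • ξ i)) (i : ι) :
    c i * φ (ξ i) = max (φ (ξ i)) 0 := by
  have hle (j : ι) : c j * φ (ξ j) ≤ max (φ (ξ j)) 0 := by
    rcases le_or_gt (φ (ξ j)) 0 with h | h
    · exact (mul_nonpos_of_nonneg_of_nonpos (hc j).1 h).trans (le_max_right _ _)
    · exact (mul_le_of_le_one_left h.le (hc j).2).trans (le_max_left _ _)
  -- the bound `∑ max (φ (ξ j)) 0` is attained at the vertex with coefficient `1` where `φ > 0`
  let e : ι → ℝ := fun j => if 0 < φ (ξ j) then 1 else 0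
  have he : ∑ j, e j • ξ j ∈ zonotope ξ :=
    ⟨e, fun j => by by_cases h : 0 < φ (ξ j) <;> simp [e, h], rfl⟩
  have hsum : ∑ j, max (φ (ξ j)) 0 ≤ ∑ j, c j * φ (ξ j) := by
    have := hface _ he
    simp only [map_sum, map_smul, smul_eq_mul] at this
    refine le_of_eq_of_le (Finset.sum_congr rfl fun j _ => ?_) this
    rcases lt_or_ge 0 (φ (ξ j)) with h | h
    · simp [e, h, h.le]
    · simp [e, h, h.not_gt]
  exact (Finset.sum_eq_sum_iff_of_le fun j _ => hle j).mp
    ((Finset.sum_le_sum fun j _ => hle j).antisymm hsum) i (Finset.mem_univ i)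

lemma vectorSpan_zonotope_face (ξ : ι → E) (φ : E →ₗ[ℝ] ℝ)
    (hne : {x ∈ zonotope ξ | ∀ y ∈ zonotope ξ, φ y ≤ φ x}.Nonempty) :
    vectorSpan ℝ {x ∈ zonotope ξ | ∀ y ∈ zonotope ξ, φ y ≤ φ x} =
      Submodule.span ℝ (Set.range fun i : {i // φ (ξ i) = 0} => ξ i) := by
  apply le_antisymm
  · rw [vectorSpan_def, Submodule.span_le]
    rintro _ ⟨_, ⟨⟨c, hc, rfl⟩, hx⟩, _, ⟨⟨c', hc', rfl⟩, hy⟩, rfl⟩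
    change (_ : E) - _ ∈ _
    rw [← Finset.sum_sub_distrib]
    refine Submodule.sum_mem _ fun i _ => ?_
    by_cases hi : φ (ξ i) = 0
    · rw [← sub_smul]
      exact Submodule.smul_mem _ _ (Submodule.subset_span ⟨⟨i, hi⟩, rfl⟩)
    · have : c i = c' i := mul_right_cancel₀ hi <|
        (mul_eq_max_of_sum_mem_face hc hx i).trans (mul_eq_max_of_sum_mem_face hc' hy i).symm
      simp [this]
  · rw [Submodule.span_le]
    rintro _ ⟨⟨i, hi⟩, rfl⟩
    obtain ⟨_, ⟨c, hc, rfl⟩, hx⟩ := hne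
    -- the `i`-th coefficient does not affect `φ`, so it may be moved freely inside the face
    have hmem (a : ℝ) (ha : a ∈ Set.Icc (0 : ℝ) 1) :
        ∑ j, Function.update c i a j • ξ j ∈
          {x ∈ zonotope ξ | ∀ y ∈ zonotope ξ, φ y ≤ φ x} := by
      refine ⟨⟨_, fun j => ?_, rfl⟩, fun y hy => ?_⟩
      · rcases eq_or_ne j i with rfl | h <;> simp [*]
      · simpa [sum_update_smul, hi] using hx y hy
    simpa [sum_update_smul, ← add_smul] using
      vsub_mem_vectorSpan ℝ (hmem 1 ⟨zero_le_one, le_rfl⟩) (hmem 0 ⟨le_rfl, zero_le_one⟩)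

end Zonotope

def veronese (d : ℕ) (s : ℝ) : Amb d := fun j => s ^ (j : ℕ)

lemma proj_basisFun_apply (k : ℕ) (x : Amb d) (j : Fin d) :
    proj (Pi.basisFun ℝ (Fin d)) k x j = if (j : ℕ) < k then x j else 0 := by
  rw [proj, Module.Basis.constr_apply_fintype, Finset.sum_apply, Finset.sum_eq_single j] <;>
    simp +contextual [ite_apply]

lemma linearIndependent_proj_veronese {m : ℕ} (hm : m ≤ d) {s : Fin m → ℝ}
    (hs : Function.Injective s) :
    LinearIndependent ℝ fun j => proj (Pi.basisFun ℝ (Fin d)) m (veronese d (s j)) := by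
  -- restricted to the first `m` coordinates these are the rows of the Vandermonde matrix of `s`
  refine LinearIndependent.of_comp (LinearMap.funLeft ℝ ℝ (Fin.castLE hm)) ?_
  have hrows : (LinearMap.funLeft ℝ ℝ (Fin.castLE hm) ∘ fun j =>
      proj (Pi.basisFun ℝ (Fin d)) m (veronese d (s j))) = (Matrix.vandermonde s).row := by
    ext j i
    simp [proj_basisFun_apply, veronese, Matrix.vandermonde]
  rw [hrows, Matrix.linearIndependent_rows_iff_isUnit, Matrix.isUnit_iff_isUnit_det,
    isUnit_iff_ne_zero, Ne, Matrix.det_vandermonde_eq_zero_iff]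
  rintro ⟨a, b, hab, hne⟩
  exact hne (hs hab)

lemma disjoint_span_veronese_ker_proj {ι : Type*} [Fintype ι] {s : ι → ℝ}
    (hs : Function.Injective s) :
    Disjoint (Submodule.span ℝ (Set.range (veronese d ∘ s)))
      (LinearMap.ker (proj (Pi.basisFun ℝ (Fin d))
        (Module.finrank ℝ (Submodule.span ℝ (Set.range (veronese d ∘ s)))))) := by
  set W := Submodule.span ℝ (Set.range (veronese d ∘ s))
  set m := Module.finrank ℝ W
  have hmd : m ≤ d := (Submodule.finrank_le W).trans (Module.finrank_fin_fun ℝ).le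
  have hmι : m ≤ Fintype.card ι := finrank_range_le_card _
  obtain ⟨g⟩ : Nonempty (Fin m ↪ ι) :=
    Function.Embedding.nonempty_of_card_le (by simpa using hmι)
  refine Submodule.disjoint_ker_of_finrank_le _ ?_
  calc m = Module.finrank ℝ (Submodule.span ℝ (Set.range fun j =>
        proj (Pi.basisFun ℝ (Fin d)) m (veronese d (s (g j))))) :=
        ((finrank_span_eq_card (linearIndependent_proj_veronese hmd (hs.comp g.injective))).trans
          (Fintype.card_fin m)).symm
    _ ≤ Module.finrank ℝ (W.map (proj (Pi.basisFun ℝ (Fin d)) m)) := by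
        refine Submodule.finrank_mono (Submodule.span_le.mpr ?_)
        rintro _ ⟨j, rfl⟩
        exact Submodule.mem_map_of_mem (Submodule.subset_span ⟨g j, rfl⟩)

theorem stmt16 (d n : ℕ) (t : Fin n → ℝ) (ht : StrictMono t)
    (ξ : Fin n → Amb d) (hξ : ∀ i j, ξ i j = t i ^ (j : ℕ))
    (Z : Set (Amb d))
    (hZ : Z = {x | ∃ c : Fin n → ℝ, (∀ i, c i ∈ Set.Icc (0:ℝ) 1) ∧ x = ∑ i, c i • ξ i}) :
    Admissible Z (Pi.basisFun ℝ (Fin d)) := by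
  obtain rfl : ξ = veronese d ∘ t := funext fun i => funext (hξ i)
  obtain rfl : Z = zonotope (veronese d ∘ t) := hZ
  rintro F ⟨φ, rfl⟩ hne
  rw [fdim, linSpan_eq_vectorSpan, vectorSpan_zonotope_face _ φ hne]
  exact Submodule.disjoint_def.mp
    (disjoint_span_veronese_ker_proj (ht.injective.comp Subtype.val_injective))
end
end

section
/- Let P be a framed polytope of dimension d and let F₁,…,F_m be faces in the (d−1)-target t_{d−1}(P) (the facets whose outer normal evaluates positively on v_d). Define λ_i = ⟨η_i, v_{d−1}⟩ where η_i is the normal covector of F_i normalized so that ⟨η_i, v_d⟩ = 1. If F₁ and F₂ are both in t_{d−1}(P) and the intersection F = F₁ ∩ F₂ is a (d−2)-face lying in the (d−2)-target of F₁ and the (d−2)-source of F₂, then λ₁ < λ₂. Consequently, the relation 't_{d−2}(F_i) ∩ s_{d−2}(F_j) ≠ ∅' on facets in the target is acyclic, and a framed polytope has no cellular (d−2)-loops supported on its target facets. -/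
noncomputable section
open scoped Classical

variable {d : ℕ}

/-
Write `π = π_{d-1}` and `v = v_{d-1}`. Admissibility makes `π` injective on `Lin F₁`, so
`π(Lin G)` is a hyperplane of `range π` complemented by `v`. For `g ∈ G` and `p ∈ F₁ \ G`,
`π g - π p = u + t v` with `u ∈ π(Lin G)`, and the target normal of `G` forces `t > 0`.
The covector `η₂ - η₁` kills `v_d`, so it factors through `π` and vanishes on `π(Lin G)`;
hence `t (λ₂ - λ₁) = (η₂ - η₁)(g - p) ≥ 0`. If `λ₁ = λ₂`, then `η₂ - η₁` vanishes on
`range π` and on `v_d`, so `η₁ = η₂` and `F₁ = F₂`; but the source normal of `G` in `F₁`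
would force `t < 0`.
Along a cellular `(d-2)`-string of target facets `λ` therefore strictly increases, and since
the normalized normal of a facet is unique, no facet occurs twice.
-/

open Module Submodule

section Frame

variable (B : Basis (Fin d) ℝ (Amb d))

@[simp]
lemma proj_basis (k : ℕ) (i : Fin d) : proj B k (B i) = if (i : ℕ) < k then B i else 0 :=
  B.constr_basis ℝ _ _

lemma proj_self : proj B d = LinearMap.id :=
  B.ext fun i => by simp

lemma fvec_of_lt {k : ℕ} (hk : k < d) : fvec B k = B ⟨k, hk⟩ :=
  dif_pos hk

lemma fvec_mem_range_proj_succ {k : ℕ} (hk : k < d) : fvec B k ∈ LinearMap.range (proj B (k + 1)) :=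
  ⟨fvec B k, by simp [fvec_of_lt B hk]⟩

lemma finrank_range_proj_le (k : ℕ) : finrank ℝ (LinearMap.range (proj B k)) ≤ k := by
  let s : Finset (Amb d) := (Finset.univ.filter fun i : Fin d => (i : ℕ) < k).image B
  have hle : LinearMap.range (proj B k) ≤ span ℝ (s : Set (Amb d)) := by
    rw [proj, Basis.constr_range, span_le]
    rintro _ ⟨i, rfl⟩
    dsimp only
    split_ifs with hi
    · exact subset_span (Finset.mem_image_of_mem B (by simpa using hi))
    · exact zero_mem _
  calc finrank ℝ (LinearMap.range (proj B k)) ≤ finrank ℝ (span ℝ (s : Set (Amb d))) :=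
        Submodule.finrank_mono hle
    _ ≤ s.card := finrank_span_finset_le_card s
    _ ≤ k := Finset.card_image_le.trans (by simp [Fin.card_filter_val_lt])

variable {B}

lemma apply_proj_pred {α : Amb d →ₗ[ℝ] ℝ} (hα : α (fvec B (d - 1)) = 0) (x : Amb d) :
    α (proj B (d - 1) x) = α x := by
  suffices α ∘ₗ proj B (d - 1) = α from LinearMap.congr_fun this x
  refine B.ext fun i => ?_
  by_cases hi : (i : ℕ) < d - 1
  · simp [hi]
  · have hid := i.isLt
    have : i = ⟨d - 1, by omega⟩ := Fin.ext (by dsimp only; omega)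
    simp [← hα, fvec_of_lt B (show d - 1 < d by omega), this]

lemma sup_span_fvec_eq_range_proj {k : ℕ} (hk : k < d) {L : Submodule ℝ (Amb d)}
    (hL : L ≤ LinearMap.range (proj B (k + 1))) (hLk : finrank ℝ L = k) (hv : fvec B k ∉ L) :
    L ⊔ span ℝ {fvec B k} = LinearMap.range (proj B (k + 1)) := by
  refine eq_of_le_of_finrank_le (sup_le hL ?_) ?_
  · exact span_le.2 (Set.singleton_subset_iff.2 (fvec_mem_range_proj_succ B hk))
  · rw [finrank_sup_span_singleton hv, hLk]
    exact finrank_range_proj_le B (k + 1)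

end Frame

lemma linSpan_mono {F G : Set (Amb d)} (h : F ⊆ G) : linSpan F ≤ linSpan G :=
  span_mono fun _ ⟨x, hx, y, hy, hw⟩ => ⟨x, h hx, y, h hy, hw⟩

lemma sub_mem_linSpan {F : Set (Amb d)} {x y : Amb d} (hx : x ∈ F) (hy : y ∈ F) :
    x - y ∈ linSpan F :=
  subset_span ⟨x, hx, y, hy, rfl⟩

lemma linSpan_image (f : Amb d →ₗ[ℝ] Amb d) (F : Set (Amb d)) :
    linSpan (f '' F) = (linSpan F).map f := by
  rw [linSpan, linSpan, map_span]
  congr 1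
  ext w
  constructor
  · rintro ⟨_, ⟨x, hx, rfl⟩, _, ⟨y, hy, rfl⟩, rfl⟩
    exact ⟨x - y, ⟨x, hx, y, hy, rfl⟩, map_sub f x y⟩
  · rintro ⟨_, ⟨x, hx, y, hy, rfl⟩, rfl⟩
    exact ⟨f x, ⟨x, hx, rfl⟩, f y, ⟨y, hy, rfl⟩, map_sub f x y⟩

lemma finrank_map_eq_of_disjoint_ker {K V W : Type*} [DivisionRing K] [AddCommGroup V]
    [Module K V] [AddCommGroup W] [Module K W] {f : V →ₗ[K] W} {p : Submodule K V}
    (h : Disjoint p (LinearMap.ker f)) : finrank K (p.map f) = finrank K p := by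
  rw [← LinearMap.range_domRestrict]
  exact LinearMap.finrank_range_of_inj (LinearMap.disjoint_ker_iff_injOn.1 h |>.injective)

lemma exists_pos_forall_apply_eq_mul {V : Type*} [AddCommGroup V] [Module ℝ V]
    {L : Submodule ℝ V} {v z : V} (hz : z ∈ L ⊔ span ℝ {v}) {μ : V →ₗ[ℝ] ℝ}
    (hμL : L ≤ LinearMap.ker μ) (hμz : 0 < μ z) (hμv : 0 < μ v) :
    ∃ t : ℝ, 0 < t ∧ ∀ α : V →ₗ[ℝ] ℝ, L ≤ LinearMap.ker α → α z = t * α v := by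
  obtain ⟨u, hu, _, hw, rfl⟩ := mem_sup.1 hz
  obtain ⟨t, rfl⟩ := mem_span_singleton.1 hw
  have hα : ∀ α : V →ₗ[ℝ] ℝ, L ≤ LinearMap.ker α → α (u + t • v) = t * α v := fun α hα => by
    simp [LinearMap.mem_ker.1 (hα hu)]
  exact ⟨t, pos_of_mul_pos_left (hα μ hμL ▸ hμz) hμv.le, hα⟩

section NormalOf

variable {Q E : Set (Amb d)} {η : Amb d →ₗ[ℝ] ℝ}

lemma IsFaceOf.subset (h : IsFaceOf Q E) : E ⊆ Q := by
  obtain ⟨φ, rfl⟩ := h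
  exact fun x hx => hx.1

lemma NormalOf.isFaceOf (h : NormalOf Q E η) : IsFaceOf Q E :=
  ⟨η, h⟩

lemma NormalOf.subset (h : NormalOf Q E η) : E ⊆ Q :=
  h.isFaceOf.subset

lemma NormalOf.le (h : NormalOf Q E η) {x y : Amb d} (hx : x ∈ E) (hy : y ∈ Q) :
    η y ≤ η x := by
  rw [h] at hx
  exact hx.2 y hy

lemma NormalOf.lt (h : NormalOf Q E η) {x y : Amb d} (hx : x ∈ E) (hy : y ∈ Q) (hyE : y ∉ E) :
    η y < η x := by
  refine lt_of_not_ge fun hxy => hyE ?_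
  rw [h]
  exact ⟨hy, fun z hz => (h.le hx hz).trans hxy⟩

lemma NormalOf.linSpan_le_ker (h : NormalOf Q E η) : linSpan E ≤ LinearMap.ker η := by
  refine span_le.2 ?_
  rintro _ ⟨x, hx, y, hy, rfl⟩
  simp [le_antisymm (h.le hy (h.subset hx)) (h.le hx (h.subset hy))]

lemma NormalOf.smul (h : NormalOf Q E η) {c : ℝ} (hc : 0 < c) : NormalOf Q E (c • η) := by
  rw [NormalOf, h]
  ext x
  simp [mul_le_mul_iff_of_pos_left hc]

end NormalOf

section Framed

variable {P F G : Set (Amb d)} {B : Basis (Fin d) ℝ (Amb d)}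

lemma Admissible.disjoint_ker_proj (hB : Admissible P B) (hF : IsFaceOf P F) (hne : F.Nonempty) :
    Disjoint (linSpan F) (LinearMap.ker (proj B (fdim F))) :=
  LinearMap.disjoint_ker.2 (hB F hF hne)

lemma sup_span_fvec_eq_range_proj_of_inKTarget (hd : 2 ≤ d) (hB : Admissible P B)
    (hF : IsFaceOf P F) (hdF : fdim F = d - 1) (hT : InKTarget B (d - 2) F G) :
    (linSpan G).map (proj B (d - 1)) ⊔ span ℝ {fvec B (d - 2)} =
      LinearMap.range (proj B (d - 1)) := by
  obtain ⟨hGF, hne, hGdim, μ, hμ, hμv⟩ := hT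
  have hk : d - 2 + 1 = d - 1 := by omega
  rw [hk] at hμ
  rw [← hk]
  refine sup_span_fvec_eq_range_proj (by omega) (hk ▸ LinearMap.map_le_range) ?_ ?_
  · rw [hk, finrank_map_eq_of_disjoint_ker, ← hGdim, fdim]
    have := hB.disjoint_ker_proj hF (hne.mono hGF.subset)
    rw [hdF] at this
    exact this.mono_left (linSpan_mono hGF.subset)
  · rw [hk, ← linSpan_image]
    exact fun hv => hμv.ne' (hμ.linSpan_le_ker hv)

lemma exists_proj_notMem_image_of_inKTarget (hd : 2 ≤ d) (hB : Admissible P B)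
    (hF : IsFaceOf P F) (hdF : fdim F = d - 1) (hT : InKTarget B (d - 2) F G) :
    ∃ p ∈ F, proj B (d - 1) p ∉ proj B (d - 1) '' G := by
  obtain ⟨hGF, hne, hGdim, -⟩ := hT
  obtain ⟨p, hpF, hpG⟩ : ∃ p ∈ F, p ∉ G := by
    by_contra! hFG
    rw [hGF.subset.antisymm hFG] at hGdim
    omega
  refine ⟨p, hpF, fun ⟨g, hg, hgp⟩ => hpG ?_⟩
  have hinj := hB.disjoint_ker_proj hF (hne.mono hGF.subset)
  rw [hdF] at hinj
  have : g - p = 0 :=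
    LinearMap.disjoint_ker.1 hinj _ (sub_mem_linSpan (hGF.subset hg) hpF) (by simp [hgp])
  exact sub_eq_zero.1 this ▸ hg

lemma exists_transversal_of_inKTarget (hd : 2 ≤ d) (hB : Admissible P B) (hF : IsFaceOf P F)
    (hdF : fdim F = d - 1) (hT : InKTarget B (d - 2) F G) :
    ∃ g ∈ G, ∃ p ∈ F, proj B (d - 1) p ∉ proj B (d - 1) '' G ∧ ∃ t : ℝ, 0 < t ∧
      ∀ α : Amb d →ₗ[ℝ] ℝ, (linSpan G).map (proj B (d - 1)) ≤ LinearMap.ker α →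
        α (proj B (d - 1) g - proj B (d - 1) p) = t * α (fvec B (d - 2)) := by
  have hrange := sup_span_fvec_eq_range_proj_of_inKTarget hd hB hF hdF hT
  obtain ⟨p, hpF, hpG⟩ := exists_proj_notMem_image_of_inKTarget hd hB hF hdF hT
  obtain ⟨-, ⟨g, hg⟩, -, μ, hμ, hμv⟩ := hT
  rw [show d - 2 + 1 = d - 1 by omega] at hμ
  set π := proj B (d - 1)
  refine ⟨g, hg, p, hpF, hpG,
    exists_pos_forall_apply_eq_mul (hrange ▸ ⟨g - p, map_sub π g p⟩) ?_ ?_ hμv⟩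
  · simpa only [linSpan_image] using hμ.linSpan_le_ker
  · rw [map_sub, sub_pos]
    exact hμ.lt (Set.mem_image_of_mem π hg) (Set.mem_image_of_mem π hpF) hpG

lemma not_inKSource_of_inKTarget (hd : 2 ≤ d) (hB : Admissible P B) (hF : IsFaceOf P F)
    (hdF : fdim F = d - 1) (hT : InKTarget B (d - 2) F G) : ¬ InKSource B (d - 2) F G := by
  rintro ⟨-, -, -, ν, hν, hνv⟩
  obtain ⟨g, hg, p, hpF, hpG, t, ht, htransversal⟩ :=
    exists_transversal_of_inKTarget hd hB hF hdF hT
  rw [show d - 2 + 1 = d - 1 by omega] at hν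
  have hνz := htransversal ν (by simpa only [linSpan_image] using hν.linSpan_le_ker)
  rw [map_sub] at hνz
  nlinarith [hν.lt (Set.mem_image_of_mem _ hg) (Set.mem_image_of_mem _ hpF) hpG]

theorem apply_fvec_lt_of_inKTarget_of_inKSource (hd : 2 ≤ d) (hB : Admissible P B)
    {F₁ F₂ : Set (Amb d)} {η₁ η₂ : Amb d →ₗ[ℝ] ℝ} (hN₁ : NormalOf P F₁ η₁)
    (hN₂ : NormalOf P F₂ η₂) (hn₁ : η₁ (fvec B (d - 1)) = 1) (hn₂ : η₂ (fvec B (d - 1)) = 1)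
    (hdF₁ : fdim F₁ = d - 1) (hT : InKTarget B (d - 2) F₁ G) (hS : InKSource B (d - 2) F₂ G) :
    η₁ (fvec B (d - 2)) < η₂ (fvec B (d - 2)) := by
  have hrange := sup_span_fvec_eq_range_proj_of_inKTarget hd hB hN₁.isFaceOf hdF₁ hT
  obtain ⟨g, hg, p, hpF₁, -, t, ht, htransversal⟩ :=
    exists_transversal_of_inKTarget hd hB hN₁.isFaceOf hdF₁ hT
  have hgF₁ := hT.1.subset hg
  set π := proj B (d - 1)
  set η := η₂ - η₁
  have hηπ : ∀ x, η (π x) = η x := apply_proj_pred (by simp [η, hn₁, hn₂])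
  have hηG : (linSpan G).map π ≤ LinearMap.ker η := by
    rintro _ ⟨w, hw, rfl⟩
    rw [LinearMap.mem_ker, hηπ, LinearMap.sub_apply,
      LinearMap.mem_ker.1 (hN₁.linSpan_le_ker (linSpan_mono hT.1.subset hw)),
      LinearMap.mem_ker.1 (hN₂.linSpan_le_ker (linSpan_mono hS.1.subset hw)), sub_zero]
  have hηv : 0 ≤ η (fvec B (d - 2)) := by
    have hηz : η (π g - π p) = (η₂ g - η₂ p) - (η₁ g - η₁ p) := by
      simp only [map_sub, hηπ, η, LinearMap.sub_apply]
      ring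
    have h₁ : η₁ g = η₁ p :=
      (hN₁.le hpF₁ (hN₁.subset hgF₁)).antisymm (hN₁.le hgF₁ (hN₁.subset hpF₁))
    have h₂ : η₂ p ≤ η₂ g := hN₂.le (hS.1.subset hg) (hN₁.subset hpF₁)
    nlinarith [htransversal η hηG]
  refine lt_of_le_of_ne (sub_nonneg.1 (by simpa only [η, LinearMap.sub_apply] using hηv))
    fun hv => ?_
  have hη : η = 0 := LinearMap.ext fun x => by
    rw [LinearMap.zero_apply, ← hηπ]
    refine sup_le hηG (span_le.2 ?_) (hrange ▸ LinearMap.mem_range_self π x)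
    simp [η, hv]
  have hF : F₁ = F₂ := by rw [hN₁, hN₂, sub_eq_zero.1 hη]
  exact not_inKSource_of_inKTarget hd hB hN₁.isFaceOf hdF₁ hT (hF ▸ hS)

lemma InKTarget.exists_normalized_normal (hd : 1 ≤ d) (hF : InKTarget B (d - 1) P F) :
    ∃ η : Amb d →ₗ[ℝ] ℝ, NormalOf P F η ∧ η (fvec B (d - 1)) = 1 := by
  obtain ⟨-, -, -, η, hη, hpos⟩ := hF
  rw [Nat.sub_add_cancel hd, proj_self, LinearMap.id_coe, Set.image_id, Set.image_id] at hη
  exact ⟨(η (fvec B (d - 1)))⁻¹ • η, hη.smul (inv_pos.2 hpos), by simp [hpos.ne']⟩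

lemma NormalOf.eq_of_apply_fvec_eq_one (hB : Admissible P B) (hne : F.Nonempty)
    (hdF : fdim F = d - 1) {η η' : Amb d →ₗ[ℝ] ℝ} (hN : NormalOf P F η) (hN' : NormalOf P F η')
    (hn : η (fvec B (d - 1)) = 1) (hn' : η' (fvec B (d - 1)) = 1) : η = η' := by
  set π := proj B (d - 1)
  have hinj := hB.disjoint_ker_proj hN.isFaceOf hne
  rw [hdF] at hinj
  have hrange : (linSpan F).map π = LinearMap.range π :=
    eq_of_le_of_finrank_le LinearMap.map_le_range
      (by rw [finrank_map_eq_of_disjoint_ker hinj]; exact (finrank_range_proj_le B _).trans hdF.ge)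
  have hπ : ∀ x, (η - η') (π x) = (η - η') x := apply_proj_pred (by simp [hn, hn'])
  refine sub_eq_zero.1 (LinearMap.ext fun x => ?_)
  obtain ⟨w, hw, hwx⟩ := hrange ▸ LinearMap.mem_range_self π x
  rw [LinearMap.zero_apply, ← hπ, ← hwx, hπ]
  simp [LinearMap.mem_ker.1 (hN.linSpan_le_ker hw), LinearMap.mem_ker.1 (hN'.linSpan_le_ker hw)]

lemma IsCellString.injective (hd : 2 ≤ d) (hB : Admissible P B) {m : ℕ}
    {Fs : Fin m → Set (Amb d)} (hFs : ∀ i, InKTarget B (d - 1) P (Fs i))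
    (hCS : IsCellString B P (d - 2) Fs) : Function.Injective Fs := by
  choose η hηN hηn using fun i => (hFs i).exists_normalized_normal (by omega)
  have hmono : StrictMono fun i => η i (fvec B (d - 2)) := by
    rcases m with _ | m
    · exact fun a => a.elim0
    refine Fin.strictMono_iff_lt_succ.2 fun i => ?_
    obtain ⟨G, hT, hS⟩ := hCS.2 i i.succ.isLt
    exact apply_fvec_lt_of_inKTarget_of_inKSource hd hB (hηN _) (hηN _) (hηn _) (hηn _)
      (hFs _).2.2.1 hT hS
  refine fun a b hab => hmono.injective ?_
  simp only [(hab ▸ hηN a).eq_of_apply_fvec_eq_one hB (hFs b).2.1 (hFs b).2.2.1 (hηN b) (hηn a)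
    (hηn b)]

end Framed

theorem stmt17_general (d : ℕ) (hd : 2 ≤ d) (P : Set (Amb d))
    (B : Module.Basis (Fin d) ℝ (Amb d)) (hB : Admissible P B) :
    (∀ (F₁ F₂ : Set (Amb d)) (η₁ η₂ : Amb d →ₗ[ℝ] ℝ),
      InKTarget B (d-1) P F₁ → InKTarget B (d-1) P F₂ →
      NormalOf P F₁ η₁ → NormalOf P F₂ η₂ →
      η₁ (fvec B (d-1)) = 1 → η₂ (fvec B (d-1)) = 1 →
      fdim (F₁ ∩ F₂) = d - 2 →
      InKTarget B (d-2) F₁ (F₁ ∩ F₂) → InKSource B (d-2) F₂ (F₁ ∩ F₂) →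
      η₁ (fvec B (d-2)) < η₂ (fvec B (d-2))) ∧
    (∀ (m : ℕ) (Fs : Fin m → Set (Amb d)),
      (∀ i, InKTarget B (d-1) P (Fs i)) →
      IsCellString B P (d-2) Fs → Function.Injective Fs) :=
  ⟨fun _ _ _ _ hT₁ _ hN₁ hN₂ hn₁ hn₂ _ hT hS =>
    apply_fvec_lt_of_inKTarget_of_inKSource hd hB hN₁ hN₂ hn₁ hn₂ hT₁.2.2.1 hT hS,
   fun _ _ hFs hCS => hCS.injective hd hB hFs⟩

theorem stmt17 (d : ℕ) (hd : 2 ≤ d) (S : Finset (Amb d)) (P : Set (Amb d))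
    (hP : P = convexHull ℝ (S : Set (Amb d))) (hPdim : fdim P = d)
    (B : Module.Basis (Fin d) ℝ (Amb d)) (hB : Admissible P B) :
    (∀ (F₁ F₂ : Set (Amb d)) (η₁ η₂ : Amb d →ₗ[ℝ] ℝ),
      InKTarget B (d-1) P F₁ → InKTarget B (d-1) P F₂ →
      NormalOf P F₁ η₁ → NormalOf P F₂ η₂ →
      η₁ (fvec B (d-1)) = 1 → η₂ (fvec B (d-1)) = 1 →
      fdim (F₁ ∩ F₂) = d - 2 →
      InKTarget B (d-2) F₁ (F₁ ∩ F₂) → InKSource B (d-2) F₂ (F₁ ∩ F₂) →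
      η₁ (fvec B (d-2)) < η₂ (fvec B (d-2))) ∧
    (∀ (m : ℕ) (Fs : Fin m → Set (Amb d)),
      (∀ i, InKTarget B (d-1) P (Fs i)) →
      IsCellString B P (d-2) Fs → Function.Injective Fs) :=
  stmt17_general d hd P B hB
end
end
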